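/- Let X* ∈ F_{n,k} be an optimal solution of min_{X∈F_{n,k}} f(X), and write the eigen-decomposition −∇f(X*) = Σ_{i=1}^n μ_i u_iu_iᵀ with μ₁ ≥ μ₂ ≥ ... ≥ μ_n and {u_i} orthonormal. Let r be the smallest integer with r ≥ k and μ_k − μ_{r+1} > 0. Then for every i with r+1 ≤ i ≤ n, X* is orthogonal to u_iu_iᵀ (i.e., ⟨X*, u_iu_iᵀ⟩ = u_iᵀX*u_i = 0), and rank(X*) ≤ r. In particular, if r = k, then X* = Σ_{i=1}^k u_iu_iᵀ is the unique orthogonal projection matrix onto the span of the k leading eigenvectors of −∇f(X*), so X* ∈ P_{n,k}. -/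

import Mathlib

/-!
Minimality of `X*` over the convex Fantope together with β-smoothness gives the variational
inequality `⟨∇f(X*), X - X*⟩ ≥ 0` on `F_{n,k}`: along the segment `X* + t (X - X*)` the gradient
inequality gives `⟨∇f(X_t), X - X*⟩ ≥ 0`, and the Lipschitz bound moves this to `t = 0` up to an
error `O(t)`. Testing it with the projection onto `u_1, …, u_k` gives
`∑_{i ≤ k} μ_i ≤ ∑_i μ_i c_i` with `c_i = u_iᵀ X* u_i ∈ [0, 1]` and `∑_i c_i = k`. Against the
threshold `μ_k`, the slack `∑_i (μ_i - μ_k) (1_{i ≤ k} - c_i)` is a sum of nonnegative terms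
equal to the difference of the two sides, so every term vanishes: `c_i = 0` whenever
`μ_i < μ_k`, in particular for `i > r`. Positive semidefiniteness turns `c_i = 0` into
`X* u_i = 0`, so `X*` lives on `u_1, …, u_r`. When `r = k`, `∑_i c_i = k` forces `c_i = 1`,
i.e. `X* u_i = u_i`, for `i ≤ k`.
-/

open Matrix

noncomputable def frobNorm {m : ℕ} (A : Matrix (Fin m) (Fin m) ℝ) : ℝ :=
  Real.sqrt (∑ i, ∑ j, (A i j) ^ 2)

/-- `eigval A j` is the `j`-th largest eigenvalue (1-indexed) of the symmetric matrix `A`. -/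
noncomputable def eigval {m : ℕ} (A : Matrix (Fin m) (Fin m) ℝ) (j : ℕ) : ℝ :=
  if h : A.IsHermitian then
    if hj : m - j < m then (h.eigenvalues ∘ Tuple.sort h.eigenvalues) ⟨m - j, hj⟩ else 0
  else 0

/-- spectral norm: largest singular value. -/
noncomputable def specNorm {m : ℕ} (A : Matrix (Fin m) (Fin m) ℝ) : ℝ :=
  Real.sqrt (eigval (Aᵀ * A) 1)

/-- `P_{n,k}`: rank-`k` orthogonal projection matrices. -/
def ProjSet (n k : ℕ) : Set (Matrix (Fin n) (Fin n) ℝ) :=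
  {X | ∃ Q : Matrix (Fin n) (Fin k) ℝ, Qᵀ * Q = 1 ∧ X = Q * Qᵀ}

/-- The Fantope `F_{n,k}`. -/
def Fantope (n k : ℕ) : Set (Matrix (Fin n) (Fin n) ℝ) :=
  {X | X.IsSymm ∧ X.PosSemidef ∧ (1 - X).PosSemidef ∧ X.trace = (k : ℝ)}

open Finset Filter Topology

section FrobeniusNorm

variable {m : ℕ}

lemma frobNorm_nonneg (A : Matrix (Fin m) (Fin m) ℝ) : 0 ≤ frobNorm A :=
  Real.sqrt_nonneg _

lemma frobNorm_smul (t : ℝ) (A : Matrix (Fin m) (Fin m) ℝ) :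
    frobNorm (t • A) = |t| * frobNorm A := by
  simp only [frobNorm, Matrix.smul_apply, smul_eq_mul, mul_pow, ← Finset.mul_sum]
  rw [Real.sqrt_mul (sq_nonneg t), Real.sqrt_sq_eq_abs]

lemma abs_trace_mul_le_frobNorm_mul (M D : Matrix (Fin m) (Fin m) ℝ) :
    |(M * D).trace| ≤ frobNorm M * frobNorm D := by
  have hD : frobNorm D = √(∑ i, ∑ j, D j i ^ 2) := by rw [frobNorm, Finset.sum_comm]
  rw [hD, frobNorm, ← Real.sqrt_mul (by positivity)]
  apply Real.abs_le_sqrt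
  simp only [trace, Matrix.diag, mul_apply]
  rw [← Fintype.sum_prod_type', ← Fintype.sum_prod_type', ← Fintype.sum_prod_type']
  exact Finset.sum_mul_sq_le_sq_mul_sq _ _ _

end FrobeniusNorm

theorem IsMinOn.trace_grad_mul_sub_nonneg {n : ℕ} {S : Set (Matrix (Fin n) (Fin n) ℝ)}
    (hS : Convex ℝ S) (hS_symm : ∀ X ∈ S, X.IsSymm)
    {f : Matrix (Fin n) (Fin n) ℝ → ℝ}
    {grad : Matrix (Fin n) (Fin n) ℝ → Matrix (Fin n) (Fin n) ℝ} {β : ℝ}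
    (hconv : ∀ X Y : Matrix (Fin n) (Fin n) ℝ, X.IsSymm → Y.IsSymm →
      f X + (grad X * (Y - X)).trace ≤ f Y)
    (hsmooth : ∀ X Y : Matrix (Fin n) (Fin n) ℝ, X.IsSymm → Y.IsSymm →
      frobNorm (grad X - grad Y) ≤ β * frobNorm (X - Y))
    {X₀ : Matrix (Fin n) (Fin n) ℝ} (hmin : IsMinOn f S X₀) (hX₀ : X₀ ∈ S)
    {X : Matrix (Fin n) (Fin n) ℝ} (hX : X ∈ S) :
    0 ≤ (grad X₀ * (X - X₀)).trace := by
  set D := X - X₀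
  have hseg : ∀ t ∈ Set.Ioc (0 : ℝ) 1, -(t * (β * frobNorm D ^ 2)) ≤ (grad X₀ * D).trace := by
    rintro t ⟨ht0, ht1⟩
    set Xt := X₀ + t • D
    have hXt : Xt ∈ S := hS.add_smul_sub_mem hX₀ hX ⟨ht0.le, ht1⟩
    have hsub : X₀ - Xt = (-t) • D := by simp [Xt]
    have hdesc : 0 ≤ (grad Xt * D).trace := by
      have h := hconv Xt X₀ (hS_symm _ hXt) (hS_symm _ hX₀)
      rw [hsub, Matrix.mul_smul, trace_smul, smul_eq_mul] at h
      nlinarith [isMinOn_iff.1 hmin Xt hXt]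
    have hlip : |((grad X₀ - grad Xt) * D).trace| ≤ t * (β * frobNorm D ^ 2) := calc
      _ ≤ frobNorm (grad X₀ - grad Xt) * frobNorm D := abs_trace_mul_le_frobNorm_mul _ _
      _ ≤ β * frobNorm (X₀ - Xt) * frobNorm D :=
        mul_le_mul_of_nonneg_right (hsmooth _ _ (hS_symm _ hX₀) (hS_symm _ hXt))
          (frobNorm_nonneg D)
      _ = t * (β * frobNorm D ^ 2) := by
        rw [hsub, frobNorm_smul, abs_neg, abs_of_pos ht0]; ring
    rw [sub_mul, trace_sub] at hlip
    linarith [neg_abs_le ((grad X₀ * D).trace - (grad Xt * D).trace)]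
  have hlim : Tendsto (fun t : ℝ => -(t * (β * frobNorm D ^ 2))) (𝓝[>] 0) (𝓝 0) := by
    refine tendsto_nhdsWithin_of_tendsto_nhds ?_
    exact (by fun_prop : Continuous fun t : ℝ => -(t * (β * frobNorm D ^ 2))).tendsto' 0 0
      (by simp)
  exact le_of_tendsto hlim (eventually_of_mem (Ioc_mem_nhdsGT one_pos) hseg)

lemma sum_vecMulVec_eq_transpose_mul {ι l m R : Type*} [Fintype ι] [CommSemiring R]
    (a : ι → l → R) (b : ι → m → R) :
    ∑ i, vecMulVec (a i) (b i) = (of a)ᵀ * of b := by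
  ext x y
  simp [Matrix.sum_apply, vecMulVec_apply, mul_apply]

lemma trace_vecMulVec_mul {m : ℕ} (v w : Fin m → ℝ) (X : Matrix (Fin m) (Fin m) ℝ) :
    (vecMulVec v w * X).trace = w ⬝ᵥ (X *ᵥ v) := by
  rw [vecMulVec_mul, trace_vecMulVec, dotProduct_comm, ← dotProduct_mulVec]

lemma trace_sum_smul_vecMulVec_mul {n : ℕ} (μ : Fin n → ℝ) (u : Fin n → Fin n → ℝ)
    (Y : Matrix (Fin n) (Fin n) ℝ) :
    ((∑ i, μ i • vecMulVec (u i) (u i)) * Y).trace = ∑ i, μ i * (u i ⬝ᵥ (Y *ᵥ u i)) := by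
  simp only [Finset.sum_mul, trace_sum, Matrix.smul_mul, trace_smul, trace_vecMulVec_mul,
    smul_eq_mul]

section Fantope

variable {n k : ℕ} {X : Matrix (Fin n) (Fin n) ℝ}

lemma convex_fantope : Convex ℝ (Fantope n k) := by
  rintro X ⟨hXs, hXp, hXq, hXt⟩ Y ⟨hYs, hYp, hYq, hYt⟩ a b ha hb hab
  refine ⟨(hXs.smul a).add (hYs.smul b), (hXp.smul ha).add (hYp.smul hb), ?_, ?_⟩
  · have h : 1 - (a • X + b • Y) = a • (1 - X) + b • (1 - Y) := by
      rw [smul_sub, smul_sub, sub_add_sub_comm, ← add_smul, hab, one_smul]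
    rw [h]
    exact (hXq.smul ha).add (hYq.smul hb)
  · rw [trace_add, trace_smul, trace_smul, hXt, hYt, smul_eq_mul, smul_eq_mul, ← add_mul, hab,
      one_mul]

lemma Fantope.dotProduct_mulVec_nonneg (hX : X ∈ Fantope n k) (v : Fin n → ℝ) :
    0 ≤ v ⬝ᵥ (X *ᵥ v) := by
  simpa using hX.2.1.dotProduct_mulVec_nonneg v

lemma Fantope.dotProduct_mulVec_le (hX : X ∈ Fantope n k) (v : Fin n → ℝ) :
    v ⬝ᵥ (X *ᵥ v) ≤ v ⬝ᵥ v := by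
  simpa [sub_mulVec, dotProduct_sub] using hX.2.2.1.dotProduct_mulVec_nonneg v

lemma Fantope.mulVec_eq_zero (hX : X ∈ Fantope n k) {v : Fin n → ℝ}
    (hv : v ⬝ᵥ (X *ᵥ v) = 0) : X *ᵥ v = 0 :=
  (hX.2.1.dotProduct_mulVec_zero_iff v).mp (by simpa using hv)

lemma Fantope.mulVec_eq_self (hX : X ∈ Fantope n k) {v : Fin n → ℝ}
    (hv : v ⬝ᵥ (X *ᵥ v) = v ⬝ᵥ v) : X *ᵥ v = v := by
  have h := (hX.2.2.1.dotProduct_mulVec_zero_iff v).mp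
    (by simp [sub_mulVec, dotProduct_sub, hv])
  rwa [sub_mulVec, one_mulVec, sub_eq_zero, eq_comm] at h

end Fantope

section Orthonormal

variable {n : ℕ} {u : Fin n → Fin n → ℝ} {X : Matrix (Fin n) (Fin n) ℝ}

lemma sum_vecMulVec_self_eq_one (hu : ∀ i j, u i ⬝ᵥ u j = if i = j then (1 : ℝ) else 0) :
    ∑ i, vecMulVec (u i) (u i) = 1 := by
  rw [sum_vecMulVec_eq_transpose_mul]
  refine mul_eq_one_comm.mp ?_
  ext i j
  simpa [mul_apply, dotProduct, one_apply] using hu i j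

lemma sum_dotProduct_mulVec_eq_trace (hu : ∀ i j, u i ⬝ᵥ u j = if i = j then (1 : ℝ) else 0)
    (X : Matrix (Fin n) (Fin n) ℝ) :
    ∑ i, u i ⬝ᵥ (X *ᵥ u i) = X.trace := by
  simpa [sum_vecMulVec_self_eq_one hu] using (trace_sum_smul_vecMulVec_mul 1 u X).symm

lemma dotProduct_mulVec_sum_vecMulVec (hu : ∀ i j, u i ⬝ᵥ u j = if i = j then (1 : ℝ) else 0)
    (s : Finset (Fin n)) (i : Fin n) :
    u i ⬝ᵥ ((∑ j ∈ s, vecMulVec (u j) (u j)) *ᵥ u i) = if i ∈ s then 1 else 0 := by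
  split_ifs with hi <;> simp [sum_mulVec, vecMulVec_mulVec, hu, hi]

lemma sum_le_sum_mul_of_trace_mul_sub_nonneg
    (hu : ∀ i j, u i ⬝ᵥ u j = if i = j then (1 : ℝ) else 0) {μ : Fin n → ℝ}
    {G : Matrix (Fin n) (Fin n) ℝ} (hG : -G = ∑ i, μ i • vecMulVec (u i) (u i))
    (s : Finset (Fin n)) (h : 0 ≤ (G * (∑ i ∈ s, vecMulVec (u i) (u i) - X)).trace) :
    ∑ i ∈ s, μ i ≤ ∑ i, μ i * (u i ⬝ᵥ (X *ᵥ u i)) := by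
  rw [← neg_neg G, hG, Matrix.neg_mul, trace_neg, Matrix.mul_sub, trace_sub,
    trace_sum_smul_vecMulVec_mul, trace_sum_smul_vecMulVec_mul, neg_nonneg, sub_nonpos] at h
  simpa [dotProduct_mulVec_sum_vecMulVec hu, sum_ite_mem] using h

lemma sum_vecMulVec_mem_fantope (hu : ∀ i j, u i ⬝ᵥ u j = if i = j then (1 : ℝ) else 0)
    (s : Finset (Fin n)) :
    ∑ i ∈ s, vecMulVec (u i) (u i) ∈ Fantope n #s := by
  have hpsd : ∀ t : Finset (Fin n), (∑ i ∈ t, vecMulVec (u i) (u i)).PosSemidef := fun t =>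
    posSemidef_sum t fun i _ => by simpa using posSemidef_vecMulVec_self_star (u i)
  refine ⟨?_, hpsd s, ?_, ?_⟩
  · simp [IsSymm, transpose_sum, transpose_vecMulVec]
  · rw [← sum_vecMulVec_self_eq_one hu, ← sum_add_sum_compl s, add_sub_cancel_left]
    exact hpsd sᶜ
  · simp [trace_sum, hu]

lemma sum_vecMulVec_mem_projSet (hu : ∀ i j, u i ⬝ᵥ u j = if i = j then (1 : ℝ) else 0)
    (s : Finset (Fin n)) :
    ∑ i ∈ s, vecMulVec (u i) (u i) ∈ ProjSet n #s := by
  set v : Fin #s → Fin n → ℝ := fun j => u (s.equivFin.symm j)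
  refine ⟨(of v)ᵀ, ?_, ?_⟩
  · ext j l
    simpa [v, mul_apply, one_apply, dotProduct, Subtype.coe_inj]
      using hu (s.equivFin.symm j) (s.equivFin.symm l)
  · rw [transpose_transpose, ← sum_vecMulVec_eq_transpose_mul, ← sum_coe_sort s]
    exact (s.equivFin.symm.sum_comp fun i => vecMulVec (u i) (u i)).symm

lemma eq_sum_vecMulVec_mulVec_of_mulVec_eq_zero
    (hu : ∀ i j, u i ⬝ᵥ u j = if i = j then (1 : ℝ) else 0) (s : Finset (Fin n))
    (h : ∀ i ∉ s, X *ᵥ u i = 0) :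
    X = ∑ i ∈ s, vecMulVec (X *ᵥ u i) (u i) := calc
  X = X * ∑ i, vecMulVec (u i) (u i) := by rw [sum_vecMulVec_self_eq_one hu, mul_one]
  _ = ∑ i, vecMulVec (X *ᵥ u i) (u i) := by simp only [Finset.mul_sum, mul_vecMulVec]
  _ = ∑ i ∈ s, vecMulVec (X *ᵥ u i) (u i) :=
    (sum_subset (subset_univ s) fun i _ hi => by rw [h i hi, zero_vecMulVec]).symm

lemma rank_le_card_of_mulVec_eq_zero (hu : ∀ i j, u i ⬝ᵥ u j = if i = j then (1 : ℝ) else 0)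
    (s : Finset (Fin n)) (h : ∀ i ∉ s, X *ᵥ u i = 0) : X.rank ≤ #s := by
  have hX : X = (of fun i : s => X *ᵥ u i)ᵀ * of fun i : s => u i := by
    rw [← sum_vecMulVec_eq_transpose_mul, sum_coe_sort s fun i => vecMulVec (X *ᵥ u i) (u i)]
    exact eq_sum_vecMulVec_mulVec_of_mulVec_eq_zero hu s h
  rw [hX]
  exact (rank_mul_le_left _ _).trans ((rank_le_card_width _).trans_eq (Fintype.card_coe s))

lemma eq_sum_vecMulVec_of_mulVec (hu : ∀ i j, u i ⬝ᵥ u j = if i = j then (1 : ℝ) else 0)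
    (s : Finset (Fin n))
    (h₁ : ∀ i ∈ s, X *ᵥ u i = u i) (h₀ : ∀ i ∉ s, X *ᵥ u i = 0) :
    X = ∑ i ∈ s, vecMulVec (u i) (u i) := by
  rw [eq_sum_vecMulVec_mulVec_of_mulVec_eq_zero hu s h₀]
  exact sum_congr rfl fun i hi => by rw [h₁ i hi]

end Orthonormal

section Weights

variable {ι : Type*} {μ c : ι → ℝ} {s : Finset ι}

lemma eq_zero_of_sum_le_sum_mul [Fintype ι] {t : ℝ}
    (hμs : ∀ i ∈ s, t ≤ μ i) (hμsc : ∀ i ∉ s, μ i ≤ t)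
    (hc₀ : ∀ i, 0 ≤ c i) (hc₁ : ∀ i, c i ≤ 1) (hcsum : ∑ i, c i = #s)
    (hle : ∑ i ∈ s, μ i ≤ ∑ i, μ i * c i) {i : ι} (hi : μ i < t) : c i = 0 := by
  classical
  set φ : ι → ℝ := fun j => (μ j - t) * ((if j ∈ s then 1 else 0) - c j)
  have hφ_nonneg : ∀ j, 0 ≤ φ j := fun j => by
    by_cases hj : j ∈ s
    · simpa [φ, hj] using mul_nonneg (sub_nonneg.2 (hμs j hj)) (sub_nonneg.2 (hc₁ j))
    · simpa [φ, hj] using mul_nonneg_of_nonpos_of_nonpos (sub_nonpos.2 (hμsc j hj))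
        (neg_nonpos.2 (hc₀ j))
  have hφ_sum : ∑ j, φ j = ∑ j ∈ s, μ j - ∑ j, μ j * c j := by
    simp only [φ, mul_sub, sub_mul, sum_sub_distrib, mul_ite, mul_one, mul_zero, sum_ite_mem,
      univ_inter, ← Finset.mul_sum, hcsum, sum_const, nsmul_eq_mul]
    ring
  have hφi : φ i = 0 :=
    (sum_eq_zero_iff_of_nonneg fun j _ => hφ_nonneg j).mp
      (le_antisymm (by linarith) (sum_nonneg fun j _ => hφ_nonneg j)) i (mem_univ i)
  have his : i ∉ s := fun h => (hμs i h).not_gt hi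
  simpa [φ, his, (sub_neg.2 hi).ne] using hφi

lemma eq_one_of_sum_eq_card (hc₁ : ∀ i ∈ s, c i ≤ 1) (hsum : ∑ i ∈ s, c i = #s) {i : ι}
    (hi : i ∈ s) : c i = 1 := by
  have h : ∑ j ∈ s, (1 - c j) = 0 := by simp [sum_sub_distrib, hsum]
  linarith [(sum_eq_zero_iff_of_nonneg fun j hj => sub_nonneg.2 (hc₁ j hj)).mp h i hi]

end Weights

lemma Antitone.eq_zero_of_sum_le_sum_mul {n k : ℕ} {μ c : Fin n → ℝ} (hμ : Antitone μ)
    (hkn : k < n) (hc₀ : ∀ i, 0 ≤ c i) (hc₁ : ∀ i, c i ≤ 1) (hcsum : ∑ i, c i = k)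
    (hle : ∑ i ∈ {i : Fin n | (i : ℕ) < k}, μ i ≤ ∑ i, μ i * c i) {i : Fin n}
    (hi : μ i < μ ⟨k - 1, by omega⟩) : c i = 0 := by
  refine _root_.eq_zero_of_sum_le_sum_mul (fun j hj => hμ ?_) (fun j hj => hμ ?_) hc₀ hc₁ ?_
    hle hi
  · simpa [Fin.le_def] using Nat.le_sub_one_of_lt (mem_filter_univ j |>.1 hj)
  · simpa [Fin.le_def] using (Nat.sub_le k 1).trans (not_lt.1 (by simpa using hj))
  · rw [hcsum, Fin.card_filter_val_lt, min_eq_right hkn.le]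

theorem stmt12 {n k : ℕ} (hkn : k < n)
    (f : Matrix (Fin n) (Fin n) ℝ → ℝ)
    (grad : Matrix (Fin n) (Fin n) ℝ → Matrix (Fin n) (Fin n) ℝ)
    (β : ℝ)
    (hconv : ∀ X Y : Matrix (Fin n) (Fin n) ℝ, X.IsSymm → Y.IsSymm →
      f X + (grad X * (Y - X)).trace ≤ f Y)
    (hsmooth : ∀ X Y : Matrix (Fin n) (Fin n) ℝ, X.IsSymm → Y.IsSymm →
      frobNorm (grad X - grad Y) ≤ β * frobNorm (X - Y))
    (Xstar : Matrix (Fin n) (Fin n) ℝ)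
    (hXstarMem : Xstar ∈ Fantope n k)
    (hXstarOpt : ∀ X ∈ Fantope n k, f Xstar ≤ f X)
    (μ : Fin n → ℝ) (hμ : Antitone μ)
    (u : Fin n → (Fin n → ℝ))
    (hu : ∀ i j : Fin n, u i ⬝ᵥ u j = if i = j then (1 : ℝ) else 0)
    (hdecomp : -(grad Xstar) = ∑ i : Fin n, μ i • vecMulVec (u i) (u i))
    (r : ℕ) (hrn : r < n)
    (hgapr : 0 < μ ⟨k - 1, by omega⟩ - μ ⟨r, hrn⟩) :
    (∀ i : Fin n, r ≤ (i : ℕ) → u i ⬝ᵥ (Xstar *ᵥ u i) = 0) ∧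
    Xstar.rank ≤ r ∧
    (r = k →
      Xstar = ∑ i ∈ Finset.univ.filter (fun i : Fin n => (i : ℕ) < k),
        vecMulVec (u i) (u i) ∧
      Xstar ∈ ProjSet n k) := by
  set c : Fin n → ℝ := fun i => u i ⬝ᵥ (Xstar *ᵥ u i)
  have hc₀ : ∀ i, 0 ≤ c i := fun i => Fantope.dotProduct_mulVec_nonneg hXstarMem (u i)
  have hc₁ : ∀ i, c i ≤ 1 := fun i => by
    simpa [hu] using Fantope.dotProduct_mulVec_le hXstarMem (u i)
  have hcsum : ∑ i, c i = k := by rw [sum_dotProduct_mulVec_eq_trace hu, hXstarMem.2.2.2]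
  have hcard : ∀ m ≤ n, #{i : Fin n | (i : ℕ) < m} = m := fun m hm => by
    rw [Fin.card_filter_val_lt, min_eq_right hm]
  set A := ({i : Fin n | (i : ℕ) < k} : Finset (Fin n))
  have hA : #A = k := hcard k hkn.le
  have hopt : ∑ i ∈ A, μ i ≤ ∑ i, μ i * c i :=
    sum_le_sum_mul_of_trace_mul_sub_nonneg hu hdecomp A <|
      (isMinOn_iff.2 hXstarOpt).trace_grad_mul_sub_nonneg convex_fantope (fun X hX => hX.1)
        hconv hsmooth hXstarMem (hA ▸ sum_vecMulVec_mem_fantope hu A)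
  have hzero : ∀ i : Fin n, r ≤ (i : ℕ) → c i = 0 := fun i hi =>
    hμ.eq_zero_of_sum_le_sum_mul hkn hc₀ hc₁ hcsum hopt
      ((hμ (Fin.le_def.2 hi)).trans_lt (sub_pos.1 hgapr))
  have hker : ∀ i ∉ ({i : Fin n | (i : ℕ) < r} : Finset (Fin n)), Xstar *ᵥ u i = 0 :=
    fun i hi => Fantope.mulVec_eq_zero hXstarMem (hzero i (by simpa using hi))
  refine ⟨hzero, ?_, fun hrk => ?_⟩
  · simpa [hcard r hrn.le] using rank_le_card_of_mulVec_eq_zero hu _ hker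
  subst hrk
  have hcA : ∀ i ∈ A, c i = 1 := fun i hi => eq_one_of_sum_eq_card (fun j _ => hc₁ j) (by
    rw [hA, ← hcsum, sum_subset (subset_univ A) fun j _ hj => hzero j (by simpa [A] using hj)]) hi
  have hX := eq_sum_vecMulVec_of_mulVec hu A
    (fun i hi => Fantope.mulVec_eq_self hXstarMem ((hcA i hi).trans (by simp [hu]))) hker
  exact ⟨hX, hX ▸ hA ▸ sum_vecMulVec_mem_projSet hu A⟩
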